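/- Let T > 0, let F be a reflection kernel with bounded parameters (γ, k), and let X ∈ D_T(L1). Then for all W¹, W² ∈ D_T(L1) and every n ≥ 1, ‖π^n_{X,F}(W¹) − π^n_{X,F}(W²)‖_{T,1} ≤ ‖F^(n)‖_op ‖W¹ − W²‖_{T,1}, where π^n_{X,F} denotes the n-fold iterate of π_{X,F}. Consequently, for every W ∈ D_T(L1), ‖π^n_{X,F}(W) − Ψ_F(X)‖_{T,1} → 0 as n → ∞. -/

import Mathlib

open MeasureTheory Set Filter
open scoped ENNReal NNReal

noncomputable section

/-- Operator norm of a kernel: `‖F‖_op = sup_{v ∈ [0,1]} ∫₀¹ |F(u,v)| du`. -/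
def kernelOpNorm (F : ℝ → ℝ → ℝ) : ℝ≥0∞ :=
  ⨆ v ∈ Icc (0:ℝ) 1, ∫⁻ u in Icc (0:ℝ) 1, ENNReal.ofReal |F u v|

/-- Composition of kernels. -/
def kernelComp (F G : ℝ → ℝ → ℝ) : ℝ → ℝ → ℝ :=
  fun u v => ∫ w in Icc (0:ℝ) 1, F u w * G w v

/-- `kernelIter F (n-1)` is the `n`-fold composition `F^(n)`; so `kernelIter F 0 = F^(1) = F`. -/
def kernelIter (F : ℝ → ℝ → ℝ) : ℕ → ℝ → ℝ → ℝ
  | 0 => F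
  | n + 1 => kernelComp F (kernelIter F n)

/-- Spatial action of a kernel on `f : [0,1] × [0,T] → ℝ`. -/
def kernelApply (F f : ℝ → ℝ → ℝ) : ℝ → ℝ → ℝ :=
  fun u t => ∫ v in Icc (0:ℝ) 1, F u v * f v t

/-- `sup_{0 ≤ t ≤ T} |f_u(t)|`, valued in `ℝ≥0∞`. -/
def pathSup (T : ℝ) (f : ℝ → ℝ → ℝ) (u : ℝ) : ℝ≥0∞ :=
  ⨆ t ∈ Icc (0:ℝ) T, ENNReal.ofReal |f u t|

/-- `‖f‖_{T,1} = ∫₀¹ sup_{0 ≤ t ≤ T} |f_u(t)| du`, valued in `ℝ≥0∞`. -/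
def TNorm (T : ℝ) (f : ℝ → ℝ → ℝ) : ℝ≥0∞ :=
  ∫⁻ u in Icc (0:ℝ) 1, pathSup T f u

/-- `f ∈ D_T(L1)`. -/
structure MemDT (T : ℝ) (f : ℝ → ℝ → ℝ) : Prop where
  rightCont : ∀ u ∈ Icc (0:ℝ) 1, ∀ t ∈ Ico (0:ℝ) T, ContinuousWithinAt (f u) (Ici t) t
  leftLim : ∀ u ∈ Icc (0:ℝ) 1, ∀ t ∈ Ioc (0:ℝ) T,
    ∃ L : ℝ, Tendsto (f u) (nhdsWithin t (Iio t)) (nhds L)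
  meas : ∀ t ∈ Icc (0:ℝ) T, Measurable fun u => f u t
  finite : TNorm T f ≠ ⊤

/-- `f ∈ D_T^↑(L1)`. -/
structure MemDTup (T : ℝ) (f : ℝ → ℝ → ℝ) : Prop where
  memDT : MemDT T f
  nonneg_zero : ∀ u ∈ Icc (0:ℝ) 1, 0 ≤ f u 0
  mono : ∀ u ∈ Icc (0:ℝ) 1, MonotoneOn (f u) (Icc (0:ℝ) T)

/-- `F` is a reflection kernel with bounded parameters `(γ, k)`. -/
structure IsReflKernel (F : ℝ → ℝ → ℝ) (γ : ℝ) (k : ℕ) : Prop where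
  meas : Measurable (Function.uncurry F)
  nonneg : ∀ u ∈ Icc (0:ℝ) 1, ∀ v ∈ Icc (0:ℝ) 1, 0 ≤ F u v
  opNorm_le_one : kernelOpNorm F ≤ 1
  gamma_mem : γ ∈ Set.Ioo (0:ℝ) 1
  k_pos : 1 ≤ k
  iter_le : kernelOpNorm (kernelIter F (k - 1)) ≤ ENNReal.ofReal γ

/-- The map `π_{X,F}`: `π_{X,F}(W)_u(t) = sup_{0 ≤ s ≤ t} max(−X_u(s) + (F W)_u(s), 0)`. -/
def piMap (X F W : ℝ → ℝ → ℝ) : ℝ → ℝ → ℝ :=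
  fun u t => ⨆ s : Icc (0:ℝ) t, max (-(X u s.1) + kernelApply F W u s.1) 0

end

noncomputable section

/-- `Y = Ψ_F(X)`: `Y` is the (unique) fixed point of `π_{X,F}` in `D_T^↑(L1)`. -/
def IsRegulator (T : ℝ) (X F Y : ℝ → ℝ → ℝ) : Prop :=
  MemDTup T Y ∧ ∀ u ∈ Icc (0:ℝ) 1, ∀ t ∈ Icc (0:ℝ) T, Y u t = piMap X F Y u t

end

noncomputable section
/-- `piIter X F W n` is the `n`-fold iterate `π^n_{X,F}(W)` (with `π^0 = id`). -/
def piIter (X F W : ℝ → ℝ → ℝ) : ℕ → ℝ → ℝ → ℝ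
  | 0 => W
  | n + 1 => piMap X F (piIter X F W n)
end


/-!
Since `x ↦ sup_{s ≤ t} max(-X + x, 0)` is 1-Lipschitz for the sup norm,
`sup_t |π(W¹)_u(t) - π(W²)_u(t)| ≤ ∫ |F(u,v)| sup_t |W¹_v(t) - W²_v(t)| dv`.
Iterating composes the kernel `|F|` with itself, and integrating over `u` produces the column
bound `‖F^(n)‖_op`; for nonnegative `F` the `ℝ≥0∞`-valued powers of `|F|` agree a.e. with the
iterates `F^(n)`. The regulator is fixed by every `π^n`, so its distance to `π^n(W)` is at most
`‖F^(n)‖_op ‖W - Ψ_F(X)‖_{T,1}`, and `‖F^(n)‖_op → 0` by submultiplicativity and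
`‖F^(k)‖_op ≤ γ < 1`.

The measure-theoretic work is to keep the iterates measurable in space. Right-continuity in time
turns suprema over `[0, t]` into countable suprema, and `π` preserves it a.e.: `F W` is
right-continuous by dominated convergence, and a running supremum of a right-continuous function
is right-continuous.
-/

open Topology

section RightContinuous

def rightDenseIcc (t : ℝ) : Set ℝ := Icc 0 t ∩ insert t (range ((↑) : ℚ → ℝ))

lemma countable_rightDenseIcc (t : ℝ) : (rightDenseIcc t).Countable :=
  ((countable_range _).insert t).mono inter_subset_right

lemma image_Icc_subset_closure_image_rightDenseIcc {α : Type*} [TopologicalSpace α]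
    {G : ℝ → α} {t : ℝ} (hG : ∀ s ∈ Ico 0 t, ContinuousWithinAt G (Ici s) s) :
    G '' Icc 0 t ⊆ closure (G '' rightDenseIcc t) := by
  rintro _ ⟨s, hs, rfl⟩
  rcases hs.2.eq_or_lt with rfl | hst
  · exact subset_closure ⟨s, ⟨hs, mem_insert _ _⟩, rfl⟩
  set Q := Ioo s t ∩ range ((↑) : ℚ → ℝ)
  have hQ : Q ⊆ rightDenseIcc t := fun x hx =>
    ⟨⟨hs.1.trans hx.1.1.le, hx.1.2.le⟩, mem_insert_of_mem _ hx.2⟩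
  have hsQ : s ∈ closure Q := by
    have hIoo : Ioo s t ⊆ closure Q := Rat.denseRange_cast.open_subset_closure_inter isOpen_Ioo
    have := closure_mono hIoo
    rw [closure_closure, closure_Ioo hst.ne] at this
    exact this ⟨le_rfl, hst.le⟩
  refine closure_mono (image_mono hQ) ?_
  exact ((hG s ⟨hs.1, hst⟩).mono fun x hx => hx.1.1.le).mem_closure_image hsQ

lemma csSup_eq_of_subset_of_subset_closure {α : Type*} [ConditionallyCompleteLinearOrder α]
    [TopologicalSpace α] [OrderTopology α] {s t : Set α} (hst : s ⊆ t)
    (hts : t ⊆ closure s) : sSup t = sSup s := by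
  rcases s.eq_empty_or_nonempty with rfl | hs
  · rw [closure_empty, subset_empty_iff] at hts
    rw [hts]
  by_cases hb : BddAbove s
  · exact ((isLUB_iff_of_subset_of_subset_closure hst hts).1 (isLUB_csSup hs hb)).csSup_eq
      (hs.mono hst)
  · rw [csSup_of_not_bddAbove hb, csSup_of_not_bddAbove fun ht => hb (ht.mono hst)]

lemma sSup_image_Icc_eq_rightDenseIcc {α : Type*} [ConditionallyCompleteLinearOrder α]
    [TopologicalSpace α] [OrderTopology α] {G : ℝ → α} {t : ℝ}
    (hG : ∀ s ∈ Ico 0 t, ContinuousWithinAt G (Ici s) s) :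
    sSup (G '' Icc 0 t) = sSup (G '' rightDenseIcc t) :=
  csSup_eq_of_subset_of_subset_closure (image_mono inter_subset_left)
    (image_Icc_subset_closure_image_rightDenseIcc hG)

lemma continuousWithinAt_runningSup {G : ℝ → ℝ} {T t : ℝ} (hbdd : BddAbove (G '' Icc 0 T))
    (hG : ∀ s ∈ Ico 0 T, ContinuousWithinAt G (Ici s) s) (ht : t ∈ Ico 0 T) :
    ContinuousWithinAt (fun t' => ⨆ s : Icc 0 t', G s) (Ici t) t := by
  have hbdd' : ∀ t' ≤ T, BddAbove (range fun s : Icc 0 t' => G s) := fun t' ht' =>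
    hbdd.mono (by rintro _ ⟨s, rfl⟩; exact ⟨s, ⟨s.2.1, s.2.2.trans ht'⟩, rfl⟩)
  have hne : Nonempty (Icc 0 t) := ⟨⟨t, ht.1, le_rfl⟩⟩
  have hle : ∀ t' ∈ Icc t T, (⨆ s : Icc 0 t, G s) ≤ ⨆ s : Icc 0 t', G s := fun t' ht' =>
    ciSup_le fun s => le_ciSup_of_le (hbdd' t' ht'.2) ⟨s, s.2.1, s.2.2.trans ht'.1⟩ le_rfl
  have hT : Icc t T ∈ 𝓝[≥] t := mem_of_superset (Ico_mem_nhdsGE ht.2) Ico_subset_Icc_self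
  refine tendsto_order.2 ⟨fun a ha => ?_, fun b hb => ?_⟩
  · filter_upwards [hT] with t' ht' using ha.trans_le (hle t' ht')
  obtain ⟨c, hc, hcb⟩ := exists_between hb
  have hGt : G t < c := (le_ciSup (hbdd' t ht.2.le) ⟨t, ht.1, le_rfl⟩).trans_lt hc
  obtain ⟨u, hu, hGu⟩ := mem_nhdsGE_iff_exists_Ico_subset.1
    ((hG t ht).eventually (gt_mem_nhds hGt))
  filter_upwards [Ico_mem_nhdsGE hu, hT] with t' ht' htT
  have : Nonempty (Icc 0 t') := ⟨⟨t, ht.1, htT.1⟩⟩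
  refine lt_of_le_of_lt (ciSup_le fun s => ?_) (max_lt hb hcb)
  rcases le_or_gt s.1 t with hst | hst
  · exact le_max_of_le_left (le_ciSup (hbdd' t ht.2.le) ⟨s, s.2.1, hst⟩)
  · exact le_max_of_le_right (hGu ⟨hst.le, s.2.2.trans_lt ht'.2⟩).le

end RightContinuous

section Suprema

variable {ι : Sort*}

lemma abs_iSup_sub_iSup_le [Nonempty ι] {f g : ι → ℝ} {r : ℝ} (h : ∀ i, |f i - g i| ≤ r) :
    |(⨆ i, f i) - ⨆ i, g i| ≤ r := by
  have hbdd : ∀ {a b : ι → ℝ}, (∀ i, |a i - b i| ≤ r) →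
      BddAbove (range b) → BddAbove (range a) := by
    rintro a b hab ⟨c, hc⟩
    refine ⟨c + r, ?_⟩
    rintro _ ⟨i, rfl⟩
    linarith [hc ⟨i, rfl⟩, (abs_le.1 (hab i)).2]
  have h' : ∀ i, |g i - f i| ≤ r := fun i => abs_sub_comm (f i) (g i) ▸ h i
  by_cases hg : BddAbove (range g)
  · have hf := hbdd h hg
    refine abs_sub_le_iff.2 ⟨sub_le_iff_le_add.2 (ciSup_le fun i => ?_),
      sub_le_iff_le_add.2 (ciSup_le fun i => ?_)⟩
    · linarith [le_ciSup hg i, (abs_le.1 (h i)).2]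
    · linarith [le_ciSup hf i, (abs_le.1 (h' i)).2]
  · have hf : ¬BddAbove (range f) := fun hf => hg (hbdd h' hf)
    rw [Real.iSup_of_not_bddAbove hf, Real.iSup_of_not_bddAbove hg, sub_self, abs_zero]
    exact (abs_nonneg _).trans (h (Classical.arbitrary ι))

lemma ofReal_abs_iSup_sub_iSup_le [Nonempty ι] {f g : ι → ℝ} {c : ℝ≥0∞}
    (h : ∀ i, ENNReal.ofReal |f i - g i| ≤ c) :
    ENNReal.ofReal |(⨆ i, f i) - ⨆ i, g i| ≤ c := by
  rcases eq_or_ne c ⊤ with rfl | hc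
  · exact le_top
  exact ENNReal.ofReal_le_of_le_toReal
    (abs_iSup_sub_iSup_le fun i => (ENNReal.ofReal_le_iff_le_toReal hc).1 (h i))

lemma ofReal_iSup_le {f : ι → ℝ} {c : ℝ≥0∞} (h : ∀ i, ENNReal.ofReal (f i) ≤ c) :
    ENNReal.ofReal (⨆ i, f i) ≤ c := by
  rcases eq_or_ne c ⊤ with rfl | hc
  · exact le_top
  exact ENNReal.ofReal_le_of_le_toReal
    (Real.iSup_le (fun i => (ENNReal.ofReal_le_iff_le_toReal hc).1 (h i)) ENNReal.toReal_nonneg)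

end Suprema

lemma enorm_integral_sub_integral_le {α : Type*} [MeasurableSpace α] {μ : Measure α}
    {f g : α → ℝ} (hfg : AEStronglyMeasurable (fun x => f x - g x) μ) :
    ‖(∫ x, f x ∂μ) - ∫ x, g x ∂μ‖ₑ ≤ ∫⁻ x, ‖f x - g x‖ₑ ∂μ := by
  rcases eq_or_ne (∫⁻ x, ‖f x - g x‖ₑ ∂μ) ⊤ with hfin | hfin
  · exact hfin ▸ le_top
  have hfg' : Integrable (fun x => f x - g x) μ := ⟨hfg, hfin.lt_top⟩
  by_cases hf : Integrable f μ
  · have hg : Integrable g μ := (hf.sub hfg').congr (.of_forall fun x => by simp)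
    rw [← integral_sub hf hg]
    exact enorm_integral_le_lintegral_enorm _
  · have hg : ¬Integrable g μ := fun hg => hf ((hg.add hfg').congr (.of_forall fun x => by simp))
    simp [integral_undef hf, integral_undef hg]

lemma ENNReal.tendsto_zero_of_le_mul {a : ℕ → ℝ≥0∞} (hmul : ∀ m n, a (m + n + 1) ≤ a m * a n)
    (h0 : a 0 ≤ 1) {j : ℕ} (hj : a j < 1) : Tendsto a atTop (𝓝 0) := by
  have hanti : Antitone a := antitone_nat_of_succ_le fun n => by
    simpa using (hmul 0 n).trans (mul_le_of_le_one_left' h0)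
  have hpow : ∀ i, a (i * (j + 1) + j) ≤ a j ^ (i + 1) := by
    intro i
    induction i with
    | zero => simp
    | succ i ih =>
      calc a ((i + 1) * (j + 1) + j) = a (j + (i * (j + 1) + j) + 1) := by ring_nf
        _ ≤ a j * a j ^ (i + 1) := (hmul _ _).trans (mul_le_mul_right ih _)
        _ = a j ^ (i + 1 + 1) := (pow_succ' _ _).symm
  have hsub : Tendsto (fun i => a (i * (j + 1) + j)) atTop (𝓝 0) :=
    tendsto_of_tendsto_of_tendsto_of_le_of_le tendsto_const_nhds
      ((ENNReal.tendsto_pow_atTop_nhds_zero_of_lt_one hj).comp (tendsto_add_atTop_nat 1))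
      (fun _ => zero_le) hpow
  have hφ : Tendsto (fun i => i * (j + 1) + j) atTop atTop :=
    tendsto_atTop_mono (fun i => (Nat.le_mul_of_pos_right i j.succ_pos).trans
      (Nat.le_add_right _ _)) tendsto_id
  have hinf := tendsto_atTop_iInf hanti
  rwa [tendsto_nhds_unique (hinf.comp hφ) hsub] at hinf

namespace LKernel

variable {α : Type*} [MeasurableSpace α] {μ : Measure α} [SFinite μ] {K L M : α → α → ℝ≥0∞}

noncomputable def apply (μ : Measure α) (K : α → α → ℝ≥0∞) (h : α → ℝ≥0∞) (u : α) : ℝ≥0∞ :=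
  ∫⁻ v, K u v * h v ∂μ

noncomputable def comp (μ : Measure α) (K L : α → α → ℝ≥0∞) : α → α → ℝ≥0∞ :=
  fun u v => apply μ K (fun w => L w v) u

/-- `pow μ K n` is the `(n + 1)`-fold composition of `K`, matching `kernelIter`. -/
noncomputable def pow (μ : Measure α) (K : α → α → ℝ≥0∞) : ℕ → α → α → ℝ≥0∞
  | 0 => K
  | n + 1 => comp μ K (pow μ K n)

lemma measurable_comp (hK : Measurable (Function.uncurry K))
    (hL : Measurable (Function.uncurry L)) : Measurable (Function.uncurry (comp μ K L)) :=
  Measurable.lintegral_prod_right' (f := fun p : (α × α) × α => K p.1.1 p.2 * L p.2 p.1.2)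
    ((hK.comp (measurable_fst.fst.prodMk measurable_snd)).mul
      (hL.comp (measurable_snd.prodMk measurable_fst.snd)))

lemma measurable_pow (hK : Measurable (Function.uncurry K)) :
    ∀ n, Measurable (Function.uncurry (pow μ K n))
  | 0 => hK
  | n + 1 => measurable_comp hK (measurable_pow hK n)

lemma aemeasurable_apply (hK : Measurable (Function.uncurry K)) {h : α → ℝ≥0∞}
    (hh : AEMeasurable h μ) : AEMeasurable (apply μ K h) μ :=
  AEMeasurable.lintegral_prod_right (f := fun u v => K u v * h v) (hK.aemeasurable.mul hh.comp_snd)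

lemma apply_apply (hK : Measurable (Function.uncurry K)) (hL : Measurable (Function.uncurry L))
    {h : α → ℝ≥0∞} (hh : AEMeasurable h μ) : apply μ K (apply μ L h) = apply μ (comp μ K L) h := by
  funext u
  have hLh : ∀ w, AEMeasurable (fun v => L w v * h v) μ := fun w =>
    (hL.comp measurable_prodMk_left).aemeasurable.mul hh
  have hKL : ∀ v, AEMeasurable (fun w => K u w * L w v) μ := fun v =>
    ((hK.comp measurable_prodMk_left).mul (hL.comp measurable_prodMk_right)).aemeasurable
  calc apply μ K (apply μ L h) u
      = ∫⁻ w, ∫⁻ v, K u w * (L w v * h v) ∂μ ∂μ :=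
        lintegral_congr fun w => (lintegral_const_mul'' _ (hLh w)).symm
    _ = ∫⁻ v, ∫⁻ w, K u w * L w v * h v ∂μ ∂μ := by
        simp_rw [← mul_assoc]
        refine lintegral_lintegral_swap (AEMeasurable.mul ?_ hh.comp_snd)
        exact ((hK.comp (measurable_const.prodMk measurable_fst)).mul hL).aemeasurable
    _ = apply μ (comp μ K L) h u :=
        lintegral_congr fun v => lintegral_mul_const'' _ (hKL v)

lemma comp_assoc (hK : Measurable (Function.uncurry K)) (hL : Measurable (Function.uncurry L))
    (hM : Measurable (Function.uncurry M)) : comp μ (comp μ K L) M = comp μ K (comp μ L M) := by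
  funext u v
  exact congrFun (apply_apply hK hL (hM.comp measurable_prodMk_right).aemeasurable).symm u

lemma pow_add (hK : Measurable (Function.uncurry K)) (m n : ℕ) :
    pow μ K (m + n + 1) = comp μ (pow μ K m) (pow μ K n) := by
  induction m with
  | zero => rw [zero_add]; rfl
  | succ m ih =>
    rw [show m + 1 + n + 1 = m + n + 1 + 1 by ring, pow, ih,
      ← comp_assoc hK (measurable_pow hK m) (measurable_pow hK n)]
    rfl

lemma lintegral_apply_le (hK : Measurable (Function.uncurry K)) {h : α → ℝ≥0∞}
    (hh : AEMeasurable h μ) {C : ℝ≥0∞} (hC : ∀ᵐ v ∂μ, ∫⁻ u, K u v ∂μ ≤ C) :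
    ∫⁻ u, apply μ K h u ∂μ ≤ C * ∫⁻ v, h v ∂μ := by
  calc ∫⁻ u, apply μ K h u ∂μ = ∫⁻ v, (∫⁻ u, K u v ∂μ) * h v ∂μ := by
        unfold LKernel.apply
        rw [lintegral_lintegral_swap (hK.aemeasurable.mul hh.comp_snd)]
        exact lintegral_congr fun v =>
          lintegral_mul_const'' _ (hK.comp measurable_prodMk_right).aemeasurable
    _ ≤ ∫⁻ v, C * h v ∂μ := lintegral_mono_ae (hC.mono fun v hv => mul_le_mul_left hv _)
    _ = C * ∫⁻ v, h v ∂μ := lintegral_const_mul'' _ hh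

end LKernel

local notation "μI" => volume.restrict (Icc (0:ℝ) 1)

noncomputable def absKernel (F : ℝ → ℝ → ℝ) : ℝ → ℝ → ℝ≥0∞ := fun u v => ENNReal.ofReal |F u v|

section KernelIter

variable {F : ℝ → ℝ → ℝ}

lemma measurable_absKernel (hF : Measurable (Function.uncurry F)) :
    Measurable (Function.uncurry (absKernel F)) :=
  ENNReal.measurable_ofReal.comp hF.abs

lemma lintegral_absKernel_le_kernelOpNorm (G : ℝ → ℝ → ℝ) {v : ℝ} (hv : v ∈ Icc (0:ℝ) 1) :
    ∫⁻ u in Icc 0 1, absKernel G u v ≤ kernelOpNorm G :=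
  le_iSup₂ (f := fun v (_ : v ∈ Icc (0:ℝ) 1) => ∫⁻ u in Icc 0 1, absKernel G u v) v hv

lemma ae_lintegral_absKernel_le_kernelOpNorm (G : ℝ → ℝ → ℝ) :
    ∀ᵐ v ∂μI, ∫⁻ u in Icc 0 1, absKernel G u v ≤ kernelOpNorm G := by
  filter_upwards [ae_restrict_mem measurableSet_Icc] with v hv
  exact lintegral_absKernel_le_kernelOpNorm G hv

lemma measurable_kernelIter (hF : Measurable (Function.uncurry F)) :
    ∀ n, Measurable (Function.uncurry (kernelIter F n))
  | 0 => hF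
  | n + 1 => by
    have h := (hF.comp (measurable_fst.fst.prodMk measurable_snd)).mul
      ((measurable_kernelIter hF n).comp (measurable_snd.prodMk measurable_fst.snd))
    exact (h.stronglyMeasurable.integral_prod_right' (ν := μI)).measurable

lemma kernelIter_nonneg (hF : ∀ u ∈ Icc (0:ℝ) 1, ∀ v ∈ Icc (0:ℝ) 1, 0 ≤ F u v) :
    ∀ n, ∀ u ∈ Icc (0:ℝ) 1, ∀ v ∈ Icc (0:ℝ) 1, 0 ≤ kernelIter F n u v
  | 0 => hF
  | n + 1 => fun u hu v hv => setIntegral_nonneg measurableSet_Icc fun w hw =>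
    mul_nonneg (hF u hu w hw) (kernelIter_nonneg hF n w hw v hv)

lemma lintegral_pow_absKernel_le (hF : Measurable (Function.uncurry F)) (n : ℕ) {v : ℝ}
    (hv : v ∈ Icc (0:ℝ) 1) :
    ∫⁻ u in Icc 0 1, LKernel.pow μI (absKernel F) n u v ≤ kernelOpNorm F ^ (n + 1) := by
  induction n with
  | zero => simpa [LKernel.pow] using lintegral_absKernel_le_kernelOpNorm F hv
  | succ n ih =>
    calc ∫⁻ u in Icc 0 1, LKernel.pow μI (absKernel F) (n + 1) u v
        ≤ kernelOpNorm F * ∫⁻ w in Icc 0 1, LKernel.pow μI (absKernel F) n w v :=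
          LKernel.lintegral_apply_le (measurable_absKernel hF)
            ((LKernel.measurable_pow (measurable_absKernel hF) n).comp
              measurable_prodMk_right).aemeasurable
            (ae_lintegral_absKernel_le_kernelOpNorm F)
      _ ≤ kernelOpNorm F ^ (n + 1 + 1) := by
          rw [pow_succ' _ (n + 1)]
          exact mul_le_mul_right ih _

/-- `kernelIter F n` is built from Bochner integrals, which are junk where they diverge; the
finite column integrals of the powers of `|F|` rule this out a.e. -/
lemma pow_absKernel_ae_eq (hF : Measurable (Function.uncurry F))
    (hF0 : ∀ u ∈ Icc (0:ℝ) 1, ∀ v ∈ Icc (0:ℝ) 1, 0 ≤ F u v) (hF1 : kernelOpNorm F ≠ ⊤)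
    (n : ℕ) {v : ℝ} (hv : v ∈ Icc (0:ℝ) 1) :
    ∀ᵐ u ∂μI, LKernel.pow μI (absKernel F) n u v = ENNReal.ofReal (kernelIter F n u v) := by
  induction n with
  | zero =>
    filter_upwards [ae_restrict_mem measurableSet_Icc] with u hu
    rw [LKernel.pow, absKernel, abs_of_nonneg (hF0 u hu v hv), kernelIter]
  | succ n ih =>
    have hfin : ∀ᵐ u ∂μI, LKernel.pow μI (absKernel F) (n + 1) u v < ⊤ :=
      ae_lt_top' ((LKernel.measurable_pow (measurable_absKernel hF) (n + 1)).comp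
          measurable_prodMk_right).aemeasurable
        ((lintegral_pow_absKernel_le hF (n + 1) hv).trans_lt (ENNReal.pow_lt_top hF1.lt_top)).ne
    filter_upwards [hfin, ae_restrict_mem measurableSet_Icc] with u hu_fin hu
    have hlint : LKernel.pow μI (absKernel F) (n + 1) u v
        = ∫⁻ w in Icc 0 1, ENNReal.ofReal (F u w * kernelIter F n w v) := by
      refine lintegral_congr_ae ?_
      filter_upwards [ih, ae_restrict_mem measurableSet_Icc] with w hw hwI
      rw [hw, absKernel, abs_of_nonneg (hF0 u hu w hwI), ENNReal.ofReal_mul (hF0 u hu w hwI)]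
    have hint : kernelIter F (n + 1) u v
        = (∫⁻ w in Icc 0 1, ENNReal.ofReal (F u w * kernelIter F n w v)).toReal := by
      refine integral_eq_lintegral_of_nonneg_ae ?_ ?_
      · filter_upwards [ae_restrict_mem measurableSet_Icc] with w hw
        exact mul_nonneg (hF0 u hu w hw) (kernelIter_nonneg hF0 n w hw v hv)
      · exact ((hF.comp measurable_prodMk_left).mul
          ((measurable_kernelIter hF n).comp measurable_prodMk_right)).aestronglyMeasurable
    rw [hint, ← hlint, ENNReal.ofReal_toReal hu_fin.ne]

lemma kernelOpNorm_kernelIter (hF : Measurable (Function.uncurry F))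
    (hF0 : ∀ u ∈ Icc (0:ℝ) 1, ∀ v ∈ Icc (0:ℝ) 1, 0 ≤ F u v) (hF1 : kernelOpNorm F ≠ ⊤)
    (n : ℕ) :
    kernelOpNorm (kernelIter F n)
      = ⨆ v ∈ Icc (0:ℝ) 1, ∫⁻ u in Icc 0 1, LKernel.pow μI (absKernel F) n u v := by
  refine iSup_congr fun v => iSup_congr fun hv => lintegral_congr_ae ?_
  filter_upwards [pow_absKernel_ae_eq hF hF0 hF1 n hv, ae_restrict_mem measurableSet_Icc]
    with u hu huI
  rw [hu, abs_of_nonneg (kernelIter_nonneg hF0 n u huI v hv)]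

lemma ae_lintegral_pow_absKernel_le (hF : Measurable (Function.uncurry F))
    (hF0 : ∀ u ∈ Icc (0:ℝ) 1, ∀ v ∈ Icc (0:ℝ) 1, 0 ≤ F u v) (hF1 : kernelOpNorm F ≠ ⊤)
    (n : ℕ) :
    ∀ᵐ v ∂μI, ∫⁻ u in Icc 0 1, LKernel.pow μI (absKernel F) n u v
      ≤ kernelOpNorm (kernelIter F n) := by
  filter_upwards [ae_restrict_mem measurableSet_Icc] with v hv
  rw [kernelOpNorm_kernelIter hF hF0 hF1]
  exact le_iSup₂ (f := fun v (_ : v ∈ Icc (0:ℝ) 1) =>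
    ∫⁻ u in Icc 0 1, LKernel.pow μI (absKernel F) n u v) v hv

lemma kernelOpNorm_kernelIter_add_le (hF : Measurable (Function.uncurry F))
    (hF0 : ∀ u ∈ Icc (0:ℝ) 1, ∀ v ∈ Icc (0:ℝ) 1, 0 ≤ F u v) (hF1 : kernelOpNorm F ≠ ⊤)
    (m n : ℕ) :
    kernelOpNorm (kernelIter F (m + n + 1))
      ≤ kernelOpNorm (kernelIter F m) * kernelOpNorm (kernelIter F n) := by
  have hK := measurable_absKernel hF
  rw [kernelOpNorm_kernelIter hF hF0 hF1, kernelOpNorm_kernelIter hF hF0 hF1 n]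
  refine iSup₂_le fun v hv => ?_
  rw [LKernel.pow_add hK]
  refine (LKernel.lintegral_apply_le (LKernel.measurable_pow hK m)
    ((LKernel.measurable_pow hK n).comp measurable_prodMk_right).aemeasurable
    (ae_lintegral_pow_absKernel_le hF hF0 hF1 m)).trans (mul_le_mul_right ?_ _)
  exact le_iSup₂ (f := fun v (_ : v ∈ Icc (0:ℝ) 1) =>
    ∫⁻ u in Icc 0 1, LKernel.pow μI (absKernel F) n u v) v hv

lemma IsReflKernel.kernelOpNorm_ne_top {γ : ℝ} {k : ℕ} (hF : IsReflKernel F γ k) :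
    kernelOpNorm F ≠ ⊤ :=
  ne_top_of_le_ne_top ENNReal.one_ne_top hF.opNorm_le_one

lemma tendsto_kernelOpNorm_kernelIter {γ : ℝ} {k : ℕ} (hF : IsReflKernel F γ k) :
    Tendsto (fun n => kernelOpNorm (kernelIter F n)) atTop (𝓝 0) := by
  refine ENNReal.tendsto_zero_of_le_mul
    (kernelOpNorm_kernelIter_add_le hF.meas hF.nonneg hF.kernelOpNorm_ne_top)
    hF.opNorm_le_one (hF.iter_le.trans_lt ?_)
  exact ENNReal.ofReal_lt_one.2 hF.gamma_mem.2

end KernelIter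

section Paths

variable {T : ℝ} {X F W V₁ V₂ : ℝ → ℝ → ℝ}

/-- `piMap` does not preserve `MemDT`: the right-continuity of `kernelApply F W u` only holds for
a.e. `u`. -/
structure MemRC (T : ℝ) (W : ℝ → ℝ → ℝ) : Prop where
  aestronglyMeasurable : ∀ t ∈ Icc (0:ℝ) T, AEStronglyMeasurable (fun u => W u t) μI
  ae_rightCont : ∀ᵐ u ∂μI, ∀ t ∈ Ico (0:ℝ) T, ContinuousWithinAt (W u) (Ici t) t
  tnorm_ne_top : TNorm T W ≠ ⊤

lemma MemDT.memRC (hW : MemDT T W) : MemRC T W :=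
  ⟨fun t ht => (hW.meas t ht).aestronglyMeasurable,
    (ae_restrict_mem measurableSet_Icc).mono hW.rightCont, hW.finite⟩

lemma tnorm_congr {f g : ℝ → ℝ → ℝ}
    (h : ∀ u ∈ Icc (0:ℝ) 1, ∀ t ∈ Icc (0:ℝ) T, f u t = g u t) : TNorm T f = TNorm T g :=
  setLIntegral_congr_fun measurableSet_Icc fun u hu =>
    iSup_congr fun t => iSup_congr fun ht => by rw [h u hu t ht]

lemma ofReal_abs_le_pathSup (f : ℝ → ℝ → ℝ) (u : ℝ) {t : ℝ} (ht : t ∈ Icc 0 T) :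
    ENNReal.ofReal |f u t| ≤ pathSup T f u :=
  le_iSup₂ (f := fun t (_ : t ∈ Icc 0 T) => ENNReal.ofReal |f u t|) t ht

lemma pathSup_eq_biSup_rightDenseIcc {f : ℝ → ℝ → ℝ} {u : ℝ}
    (hf : ∀ t ∈ Ico 0 T, ContinuousWithinAt (f u) (Ici t) t) :
    pathSup T f u = ⨆ t ∈ rightDenseIcc T, ENNReal.ofReal |f u t| := by
  rw [pathSup, ← sSup_image, ← sSup_image]
  exact sSup_image_Icc_eq_rightDenseIcc fun t ht =>
    (ENNReal.continuous_ofReal.comp continuous_abs).continuousAt.comp_continuousWithinAt (hf t ht)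

lemma aemeasurable_pathSup {f : ℝ → ℝ → ℝ}
    (hf : ∀ t ∈ Icc (0:ℝ) T, AEMeasurable (fun u => f u t) μI)
    (hrc : ∀ᵐ u ∂μI, ∀ t ∈ Ico (0:ℝ) T, ContinuousWithinAt (f u) (Ici t) t) :
    AEMeasurable (pathSup T f) μI := by
  refine (AEMeasurable.biSup _ (countable_rightDenseIcc T) fun t ht =>
    ENNReal.measurable_ofReal.comp_aemeasurable (hf t ht.1).abs).congr ?_
  filter_upwards [hrc] with u hu using (pathSup_eq_biSup_rightDenseIcc hu).symm

namespace MemRC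

lemma aemeasurable_pathSup (hW : MemRC T W) : AEMeasurable (pathSup T W) μI :=
  _root_.aemeasurable_pathSup (fun t ht => (hW.aestronglyMeasurable t ht).aemeasurable)
    hW.ae_rightCont

lemma ae_pathSup_lt_top (hW : MemRC T W) : ∀ᵐ v ∂μI, pathSup T W v < ⊤ :=
  ae_lt_top' hW.aemeasurable_pathSup hW.tnorm_ne_top

lemma sub (hV₁ : MemRC T V₁) (hV₂ : MemRC T V₂) : MemRC T (fun u t => V₁ u t - V₂ u t) := by
  refine ⟨fun t ht => (hV₁.aestronglyMeasurable t ht).sub (hV₂.aestronglyMeasurable t ht), ?_, ?_⟩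
  · filter_upwards [hV₁.ae_rightCont, hV₂.ae_rightCont] with u h₁ h₂ t ht
    exact (h₁ t ht).sub (h₂ t ht)
  · have hle : ∀ u, pathSup T (fun u t => V₁ u t - V₂ u t) u ≤ pathSup T V₁ u + pathSup T V₂ u :=
      fun u => iSup₂_le fun t ht => calc
        ENNReal.ofReal |V₁ u t - V₂ u t| ≤ ENNReal.ofReal |V₁ u t| + ENNReal.ofReal |V₂ u t| :=
          (ENNReal.ofReal_le_ofReal (abs_sub _ _)).trans ENNReal.ofReal_add_le
        _ ≤ pathSup T V₁ u + pathSup T V₂ u :=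
          add_le_add (ofReal_abs_le_pathSup V₁ u ht) (ofReal_abs_le_pathSup V₂ u ht)
    refine ne_top_of_le_ne_top ?_ (lintegral_mono hle)
    rw [lintegral_add_left' hV₁.aemeasurable_pathSup]
    exact ENNReal.add_ne_top.2 ⟨hV₁.tnorm_ne_top, hV₂.tnorm_ne_top⟩

end MemRC

lemma aestronglyMeasurable_kernelApply (hF : Measurable (Function.uncurry F)) {s : ℝ}
    (hW : AEStronglyMeasurable (fun v => W v s) μI) :
    AEStronglyMeasurable (fun u => kernelApply F W u s) μI :=
  AEStronglyMeasurable.integral_prod_right' (f := fun p : ℝ × ℝ => F p.1 p.2 * W p.2 s)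
    (hF.aestronglyMeasurable.mul hW.comp_snd)

lemma ofReal_abs_kernelApply_le (F W : ℝ → ℝ → ℝ) (u s : ℝ) :
    ENNReal.ofReal |kernelApply F W u s|
      ≤ LKernel.apply μI (absKernel F) (fun v => ENNReal.ofReal |W v s|) u := by
  rw [← Real.enorm_eq_ofReal_abs]
  refine (enorm_integral_le_lintegral_enorm _).trans_eq (lintegral_congr fun v => ?_)
  rw [enorm_mul, Real.enorm_eq_ofReal_abs, Real.enorm_eq_ofReal_abs, absKernel]

lemma ofReal_abs_kernelApply_sub_le (hF : Measurable (Function.uncurry F)) {u s : ℝ}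
    (hV : AEStronglyMeasurable (fun v => V₁ v s - V₂ v s) μI) :
    ENNReal.ofReal |kernelApply F V₁ u s - kernelApply F V₂ u s|
      ≤ LKernel.apply μI (absKernel F) (fun v => ENNReal.ofReal |V₁ v s - V₂ v s|) u := by
  have hmeas : AEStronglyMeasurable (fun v => F u v * V₁ v s - F u v * V₂ v s) μI :=
    ((hF.comp measurable_prodMk_left).aestronglyMeasurable.mul hV).congr
      (.of_forall fun v => mul_sub (F u v) (V₁ v s) (V₂ v s))
  rw [← Real.enorm_eq_ofReal_abs]
  refine (enorm_integral_sub_integral_le hmeas).trans_eq (lintegral_congr fun v => ?_)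
  rw [← mul_sub, enorm_mul, Real.enorm_eq_ofReal_abs, Real.enorm_eq_ofReal_abs, absKernel]

end Paths

section PiMap

variable {T : ℝ} {X F W V₁ V₂ : ℝ → ℝ → ℝ}

lemma ofReal_max_le_pathSup_add {u s : ℝ} (hs : s ∈ Icc 0 T) :
    ENNReal.ofReal (max (-(X u s) + kernelApply F W u s) 0)
      ≤ pathSup T X u + LKernel.apply μI (absKernel F) (pathSup T W) u := calc
  _ ≤ ENNReal.ofReal (|X u s| + |kernelApply F W u s|) := by
      refine ENNReal.ofReal_le_ofReal (max_le ?_ (by positivity))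
      linarith [neg_abs_le (X u s), le_abs_self (kernelApply F W u s)]
  _ = ENNReal.ofReal |X u s| + ENNReal.ofReal |kernelApply F W u s| :=
      ENNReal.ofReal_add (abs_nonneg _) (abs_nonneg _)
  _ ≤ _ := add_le_add (ofReal_abs_le_pathSup X u hs) ((ofReal_abs_kernelApply_le F W u s).trans
      (lintegral_mono fun v => mul_le_mul_right (ofReal_abs_le_pathSup W v hs) _))

lemma pathSup_piMap_le (u : ℝ) :
    pathSup T (piMap X F W) u ≤ pathSup T X u + LKernel.apply μI (absKernel F) (pathSup T W) u :=
  iSup₂_le fun t ht => by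
    unfold piMap
    rw [abs_of_nonneg (Real.iSup_nonneg fun _ => le_max_right _ _)]
    exact ofReal_iSup_le fun s => ofReal_max_le_pathSup_add ⟨s.2.1, s.2.2.trans ht.2⟩

lemma pathSup_piMap_sub_le (hF : Measurable (Function.uncurry F))
    (hV : ∀ s ∈ Icc (0:ℝ) T, AEStronglyMeasurable (fun v => V₁ v s - V₂ v s) μI) (u : ℝ) :
    pathSup T (fun a b => piMap X F V₁ a b - piMap X F V₂ a b) u
      ≤ LKernel.apply μI (absKernel F) (pathSup T fun a b => V₁ a b - V₂ a b) u :=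
  iSup₂_le fun t ht => by
    have : Nonempty (Icc 0 t) := ⟨⟨0, le_rfl, ht.1⟩⟩
    refine ofReal_abs_iSup_sub_iSup_le fun s => ?_
    have hs : s.1 ∈ Icc 0 T := ⟨s.2.1, s.2.2.trans ht.2⟩
    calc ENNReal.ofReal |max (-(X u s) + kernelApply F V₁ u s) 0
          - max (-(X u s) + kernelApply F V₂ u s) 0|
        ≤ ENNReal.ofReal |kernelApply F V₁ u s - kernelApply F V₂ u s| :=
          ENNReal.ofReal_le_ofReal ((abs_max_sub_max_le_abs _ _ _).trans_eq
            (congrArg abs (by ring)))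
      _ ≤ _ := (ofReal_abs_kernelApply_sub_le hF (hV s hs)).trans
          (lintegral_mono fun v => mul_le_mul_right (ofReal_abs_le_pathSup _ v hs) _)

lemma lintegral_pathSup_add_apply_ne_top (hF : Measurable (Function.uncurry F))
    (hF1 : kernelOpNorm F ≠ ⊤) (hX : MemRC T X) (hW : MemRC T W) :
    ∫⁻ u in Icc 0 1, pathSup T X u + LKernel.apply μI (absKernel F) (pathSup T W) u ≠ ⊤ := by
  rw [lintegral_add_left' hX.aemeasurable_pathSup]
  exact ENNReal.add_ne_top.2 ⟨hX.tnorm_ne_top, ne_top_of_le_ne_top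
    (ENNReal.mul_ne_top hF1 hW.tnorm_ne_top) (LKernel.lintegral_apply_le (measurable_absKernel hF)
      hW.aemeasurable_pathSup (ae_lintegral_absKernel_le_kernelOpNorm F))⟩

/-- Dominated convergence, with `|F(u,·)| sup_t |W_·(t)|` as dominating function. -/
lemma continuousWithinAt_kernelApply (hF : Measurable (Function.uncurry F)) (hW : MemRC T W)
    {u : ℝ} (hu : LKernel.apply μI (absKernel F) (pathSup T W) u ≠ ⊤) {s : ℝ}
    (hs : s ∈ Ico 0 T) : ContinuousWithinAt (kernelApply F W u) (Ici s) s := by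
  have hmem : ∀ᶠ s' in 𝓝[≥] s, s' ∈ Icc 0 T :=
    mem_of_superset (Ico_mem_nhdsGE hs.2) fun x hx => ⟨hs.1.trans hx.1, hx.2.le⟩
  refine continuousWithinAt_of_dominated
    (bound := fun v => (absKernel F u v * pathSup T W v).toReal) ?_ ?_ ?_ ?_
  · filter_upwards [hmem] with s' hs'
    exact (hF.comp measurable_prodMk_left).aestronglyMeasurable.mul (hW.aestronglyMeasurable s' hs')
  · filter_upwards [hmem] with s' hs'
    filter_upwards [hW.ae_pathSup_lt_top] with v hv
    rw [Real.norm_eq_abs, abs_mul, absKernel, ENNReal.toReal_mul,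
      ENNReal.toReal_ofReal (abs_nonneg _)]
    exact mul_le_mul_of_nonneg_left
      ((ENNReal.ofReal_le_iff_le_toReal hv.ne).1 (ofReal_abs_le_pathSup W v hs')) (abs_nonneg _)
  · exact integrable_toReal_of_lintegral_ne_top (((measurable_absKernel hF).comp
      measurable_prodMk_left).aemeasurable.mul hW.aemeasurable_pathSup) hu
  · filter_upwards [hW.ae_rightCont] with v hv
    exact continuousWithinAt_const.mul (hv s hs)

lemma ae_rightCont_and_bddAbove_of_memRC (hF : Measurable (Function.uncurry F))
    (hF1 : kernelOpNorm F ≠ ⊤) (hX : MemRC T X) (hW : MemRC T W) :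
    ∀ᵐ u ∂μI,
      (∀ s ∈ Ico 0 T, ContinuousWithinAt (fun s => max (-(X u s) + kernelApply F W u s) 0)
        (Ici s) s) ∧
      BddAbove ((fun s => max (-(X u s) + kernelApply F W u s) 0) '' Icc 0 T) := by
  have hK := measurable_absKernel hF
  filter_upwards [ae_lt_top' (hX.aemeasurable_pathSup.add
    (LKernel.aemeasurable_apply hK hW.aemeasurable_pathSup))
    (lintegral_pathSup_add_apply_ne_top hF hF1 hX hW), hX.ae_rightCont]
    with u hu hXu
  refine ⟨fun s hs => ((hXu s hs).neg.add (continuousWithinAt_kernelApply hF hW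
    (ENNReal.add_lt_top.1 hu).2.ne hs)).max continuousWithinAt_const, ?_⟩
  refine ⟨(pathSup T X u + LKernel.apply μI (absKernel F) (pathSup T W) u).toReal, ?_⟩
  rintro _ ⟨s, hs, rfl⟩
  exact (ENNReal.ofReal_le_iff_le_toReal hu.ne).1 (ofReal_max_le_pathSup_add hs)

lemma MemRC.piMap (hW : MemRC T W) (hF : Measurable (Function.uncurry F))
    (hF1 : kernelOpNorm F ≠ ⊤) (hX : MemRC T X) : MemRC T (piMap X F W) := by
  have hG := ae_rightCont_and_bddAbove_of_memRC hF hF1 hX hW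
  refine ⟨fun t ht => ?_, ?_, ?_⟩
  · have : Countable (rightDenseIcc t) := (countable_rightDenseIcc t).to_subtype
    refine (AEMeasurable.iSup (f := fun (s : rightDenseIcc t) u =>
      max (-(X u s) + kernelApply F W u s) 0) fun s => ?_).aestronglyMeasurable.congr ?_
    · have hs : s.1 ∈ Icc 0 T := ⟨s.2.1.1, s.2.1.2.trans ht.2⟩
      exact ((hX.aestronglyMeasurable s hs).aemeasurable.neg.add
        (aestronglyMeasurable_kernelApply hF (hW.aestronglyMeasurable s hs)).aemeasurable).max
          aemeasurable_const
    · filter_upwards [hG] with u hu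
      have h := sSup_image_Icc_eq_rightDenseIcc (t := t) fun s hs =>
        hu.1 s ⟨hs.1, hs.2.trans_le ht.2⟩
      rw [sSup_image', sSup_image'] at h
      exact h.symm
  · filter_upwards [hG] with u hu t ht
    exact continuousWithinAt_runningSup hu.2 hu.1 ht
  · exact ne_top_of_le_ne_top (lintegral_pathSup_add_apply_ne_top hF hF1 hX hW)
      (lintegral_mono pathSup_piMap_le)

end PiMap

section PiIter

variable {T : ℝ} {X F W V₁ V₂ Y : ℝ → ℝ → ℝ}

lemma MemRC.piIter (hW : MemRC T W) (hF : Measurable (Function.uncurry F))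
    (hF1 : kernelOpNorm F ≠ ⊤) (hX : MemRC T X) : ∀ n, MemRC T (piIter X F W n)
  | 0 => hW
  | n + 1 => (hW.piIter hF hF1 hX n).piMap hF hF1 hX

lemma pathSup_piIter_sub_le (hF : Measurable (Function.uncurry F)) (hF1 : kernelOpNorm F ≠ ⊤)
    (hX : MemRC T X) (hV₁ : MemRC T V₁) (hV₂ : MemRC T V₂) (n : ℕ) (u : ℝ) :
    pathSup T (fun a b => piIter X F V₁ (n + 1) a b - piIter X F V₂ (n + 1) a b) u
      ≤ LKernel.apply μI (LKernel.pow μI (absKernel F) n)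
          (pathSup T fun a b => V₁ a b - V₂ a b) u := by
  have hK := measurable_absKernel hF
  induction n generalizing u with
  | zero => exact pathSup_piMap_sub_le (X := X) hF (hV₁.sub hV₂).aestronglyMeasurable u
  | succ n ih =>
    calc _ ≤ LKernel.apply μI (absKernel F)
          (pathSup T fun a b => piIter X F V₁ (n + 1) a b - piIter X F V₂ (n + 1) a b) u :=
          pathSup_piMap_sub_le hF ((hV₁.piIter hF hF1 hX (n + 1)).sub
            (hV₂.piIter hF hF1 hX (n + 1))).aestronglyMeasurable u
      _ ≤ LKernel.apply μI (absKernel F) (LKernel.apply μI (LKernel.pow μI (absKernel F) n)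
          (pathSup T fun a b => V₁ a b - V₂ a b)) u :=
          lintegral_mono fun w => mul_le_mul_right (ih w) _
      _ = _ := congrFun (LKernel.apply_apply hK (LKernel.measurable_pow hK n)
          (hV₁.sub hV₂).aemeasurable_pathSup) u

lemma tnorm_piIter_sub_le (hF : Measurable (Function.uncurry F))
    (hF0 : ∀ u ∈ Icc (0:ℝ) 1, ∀ v ∈ Icc (0:ℝ) 1, 0 ≤ F u v) (hF1 : kernelOpNorm F ≠ ⊤)
    (hX : MemRC T X) (hV₁ : MemRC T V₁) (hV₂ : MemRC T V₂) (n : ℕ) :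
    TNorm T (fun u t => piIter X F V₁ (n + 1) u t - piIter X F V₂ (n + 1) u t)
      ≤ kernelOpNorm (kernelIter F n) * TNorm T (fun u t => V₁ u t - V₂ u t) :=
  (lintegral_mono (pathSup_piIter_sub_le hF hF1 hX hV₁ hV₂ n)).trans
    (LKernel.lintegral_apply_le (LKernel.measurable_pow (measurable_absKernel hF) n)
      (hV₁.sub hV₂).aemeasurable_pathSup (ae_lintegral_pow_absKernel_le hF hF0 hF1 n))

lemma piIter_eq_of_isRegulator (hY : IsRegulator T X F Y) :
    ∀ n, ∀ u ∈ Icc (0:ℝ) 1, ∀ t ∈ Icc (0:ℝ) T, piIter X F Y n u t = Y u t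
  | 0 => fun _ _ _ _ => rfl
  | n + 1 => fun u hu t ht => by
    rw [hY.2 u hu t ht]
    refine iSup_congr fun s => congrArg (fun x => max (-(X u s) + x) 0) ?_
    exact setIntegral_congr_fun measurableSet_Icc fun v hv => by
      rw [piIter_eq_of_isRegulator hY n v hv s ⟨s.2.1, s.2.2.trans ht.2⟩]

end PiIter

theorem piMap_iterates_contract_and_converge_general
    (T : ℝ) (X F : ℝ → ℝ → ℝ) (γ : ℝ) (k : ℕ)
    (hX : MemDT T X) (hF : IsReflKernel F γ k) :
    (∀ W1 W2 : ℝ → ℝ → ℝ, MemDT T W1 → MemDT T W2 → ∀ n : ℕ, 1 ≤ n →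
      TNorm T (fun u t => piIter X F W1 n u t - piIter X F W2 n u t)
        ≤ kernelOpNorm (kernelIter F (n - 1))
            * TNorm T (fun u t => W1 u t - W2 u t)) ∧
    (∀ W Y : ℝ → ℝ → ℝ, MemDT T W → IsRegulator T X F Y →
      Filter.Tendsto (fun n : ℕ => TNorm T (fun u t => piIter X F W n u t - Y u t))
        Filter.atTop (nhds 0)) := by
  have contraction : ∀ W1 W2 : ℝ → ℝ → ℝ, MemDT T W1 → MemDT T W2 → ∀ n : ℕ, 1 ≤ n →
      TNorm T (fun u t => piIter X F W1 n u t - piIter X F W2 n u t)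
        ≤ kernelOpNorm (kernelIter F (n - 1)) * TNorm T (fun u t => W1 u t - W2 u t) := by
    intro W1 W2 hW1 hW2 n hn
    obtain ⟨n, rfl⟩ := Nat.exists_eq_add_of_le' hn
    exact tnorm_piIter_sub_le hF.meas hF.nonneg hF.kernelOpNorm_ne_top hX.memRC hW1.memRC
      hW2.memRC n
  refine ⟨contraction, fun W Y hW hY => ?_⟩
  have hlim : Tendsto (fun n => kernelOpNorm (kernelIter F (n - 1))
      * TNorm T (fun u t => W u t - Y u t)) atTop (𝓝 0) := by
    simpa using ENNReal.Tendsto.mul_const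
      ((tendsto_kernelOpNorm_kernelIter hF).comp (tendsto_sub_atTop_nat 1))
      (Or.inr (hW.memRC.sub hY.1.memDT.memRC).tnorm_ne_top)
  refine tendsto_of_tendsto_of_tendsto_of_le_of_le' tendsto_const_nhds hlim
    (.of_forall fun _ => zero_le) ?_
  filter_upwards [eventually_ge_atTop 1] with n hn
  calc TNorm T (fun u t => piIter X F W n u t - Y u t)
      = TNorm T (fun u t => piIter X F W n u t - piIter X F Y n u t) :=
        tnorm_congr fun u hu t ht => by rw [piIter_eq_of_isRegulator hY n u hu t ht]
    _ ≤ _ := contraction W Y hW hY.1.memDT n hn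

/-- contraction estimate for the iterates of `π_{X,F}` and convergence of the
iterates to the regulator `Ψ_F(X)`. -/
theorem piMap_iterates_contract_and_converge
    (T : ℝ) (hT : 0 < T) (X F : ℝ → ℝ → ℝ) (γ : ℝ) (k : ℕ)
    (hX : MemDT T X) (hF : IsReflKernel F γ k) :
    (∀ W1 W2 : ℝ → ℝ → ℝ, MemDT T W1 → MemDT T W2 → ∀ n : ℕ, 1 ≤ n →
      TNorm T (fun u t => piIter X F W1 n u t - piIter X F W2 n u t)
        ≤ kernelOpNorm (kernelIter F (n - 1))
            * TNorm T (fun u t => W1 u t - W2 u t)) ∧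
    (∀ W Y : ℝ → ℝ → ℝ, MemDT T W → IsRegulator T X F Y →
      Filter.Tendsto (fun n : ℕ => TNorm T (fun u t => piIter X F W n u t - Y u t))
        Filter.atTop (nhds 0)) :=
  piMap_iterates_contract_and_converge_general T X F γ k hX hF
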